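/- The deterministic AF/BW tripartite process is a process function: define ω : Bool³ → Bool³ by ω(o₁,o₂,o₃) = (¬o₂ ∧ o₃, ¬o₃ ∧ o₁, ¬o₁ ∧ o₂) (each party's input is a monotone-style function of the other two outputs). Then for every choice of interventions h₁,h₂,h₃ : Bool → Bool, the map (i₁,i₂,i₃) ↦ ω(h₁(i₁),h₂(i₂),h₃(i₃)) has exactly one fixed point. -/

import Mathlib

/-!
Party `k` receives `true` only if the next party outputs `false` and the one after it `true`,
so at most one party ever receives `true`; and once party `k` receives `true`, its own output no
longer influences `afbw`. Writing `0 = (false, false, false)`, a fixed point `i` of `afbw ∘ h` has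
at most one `true` entry and hence satisfies `afbw (h i) = afbw (h 0)`; conversely `afbw (h 0)` is
a fixed point. So the unique fixed point is `afbw (h 0)`.
-/

def IsProcessFunction {O₁ O₂ O₃ I₁ I₂ I₃ : Type*} (ω : O₁ × O₂ × O₃ → I₁ × I₂ × I₃) : Prop :=
  ∀ (h₁ : I₁ → O₁) (h₂ : I₂ → O₂) (h₃ : I₃ → O₃), ∃! i, ω (Prod.map h₁ (Prod.map h₂ h₃) i) = i

def afbw (o : Bool × Bool × Bool) : Bool × Bool × Bool :=
  (!o.2.1 && o.2.2, !o.2.2 && o.1, !o.1 && o.2.1)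

theorem afbw_eq_zero_or_single (o : Bool × Bool × Bool) :
    afbw o = (false, false, false) ∨ afbw o = (true, false, false) ∨
      afbw o = (false, true, false) ∨ afbw o = (false, false, true) := by
  obtain ⟨a, b, c⟩ := o
  cases a <;> cases b <;> cases c <;> simp [afbw]

theorem afbw_congr_fst {a b c : Bool} (a' : Bool) (h : (afbw (a, b, c)).1 = true) :
    afbw (a', b, c) = afbw (a, b, c) := by
  simp_all [afbw]

theorem afbw_congr_snd {a b c : Bool} (b' : Bool) (h : (afbw (a, b, c)).2.1 = true) :
    afbw (a, b', c) = afbw (a, b, c) := by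
  simp_all [afbw]

theorem afbw_congr_thd {a b c : Bool} (c' : Bool) (h : (afbw (a, b, c)).2.2 = true) :
    afbw (a, b, c') = afbw (a, b, c) := by
  simp_all [afbw]

section Intervention

variable (h₁ h₂ h₃ : Bool → Bool)

local notation "F" => fun i => afbw (Prod.map h₁ (Prod.map h₂ h₃) i)

theorem afbw_map_eq_afbw_map_false {i : Bool × Bool × Bool}
    (hi : i = F i ∨ i = F (false, false, false)) : F i = F (false, false, false) := by
  obtain ⟨o, rfl⟩ : ∃ o, i = afbw o := by rcases hi with hi | hi <;> exact ⟨_, hi⟩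
  -- the case `afbw o = 0` is closed by `rw`
  rcases afbw_eq_zero_or_single o with ho | ho | ho | ho <;> rw [ho] at hi ⊢ <;>
    dsimp only [Prod.map] at hi ⊢
  · exact afbw_congr_fst _ (by rcases hi with hi | hi <;> exact (congrArg (·.1) hi).symm)
  · exact afbw_congr_snd _ (by rcases hi with hi | hi <;> exact (congrArg (·.2.1) hi).symm)
  · exact afbw_congr_thd _ (by rcases hi with hi | hi <;> exact (congrArg (·.2.2) hi).symm)

end Intervention

theorem afbw_isProcessFunction : IsProcessFunction afbw := fun h₁ h₂ h₃ =>
  ⟨_, afbw_map_eq_afbw_map_false h₁ h₂ h₃ (.inr rfl),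
    fun _ hi => hi.symm.trans (afbw_map_eq_afbw_map_false h₁ h₂ h₃ (.inl hi.symm))⟩

/-- The deterministic AF/BW tripartite process
`ω (o₁,o₂,o₃) = (¬o₂ ∧ o₃, ¬o₃ ∧ o₁, ¬o₁ ∧ o₂)` is a process function:
for every choice of interventions `h₁ h₂ h₃ : Bool → Bool`, the map
`(i₁,i₂,i₃) ↦ ω (h₁ i₁, h₂ i₂, h₃ i₃)` has exactly one fixed point. -/
theorem afbw_is_process_function (h₁ h₂ h₃ : Bool → Bool) :
    ∃! i : Bool × Bool × Bool,
      ((!(h₂ i.2.1) && h₃ i.2.2), (!(h₃ i.2.2) && h₁ i.1), (!(h₁ i.1) && h₂ i.2.1)) = i :=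
  afbw_isProcessFunction h₁ h₂ h₃
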